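/- Let a, a', b, b' be words with a ≡^A a' and b ≡^A b', with canonical permutations σ_{a,a'} and σ_{b,b'}. Let φ : a → b and φ' : a' → b' be word morphisms (a = b∘φ, a' = b'∘φ') satisfying the compatibility condition φ' ∘ σ_{a,a'} = σ_{b,b'} ∘ φ. Then for every letter x, the induced maps on occurrence sets agree: ⌊φ⌋_x = ⌊φ'⌋_x. -/
import Mathlib


variable {A : Type*} [DecidableEq A]

/-- The finite set of positions at which the letter `x` occurs in the word `a`. -/
def occFinset {n : ℕ} (a : Fin n → A) (x : A) : Finset (Fin n) :=
  Finset.univ.filter (fun i => a i = x)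

/-- The number of occurrences of the letter `x` in the word `a`. -/
def cnt {n : ℕ} (a : Fin n → A) (x : A) : ℕ := (occFinset a x).card

/-- The position of the `j`-th occurrence (in increasing order) of the letter `x`
in the word `a`. -/
def pos {n : ℕ} (a : Fin n → A) (x : A) (j : Fin (cnt a x)) : Fin n :=
  ((occFinset a x).orderIsoOfFin rfl j : Fin n)

/-- The occurrence index of the position `i` among the increasingly enumerated
occurrences of the letter `a i` in the word `a`. -/
def occ {n : ℕ} (a : Fin n → A) (i : Fin n) : Fin (cnt a (a i)) :=
  ((occFinset a (a i)).orderIsoOfFin rfl).symm ⟨i, by simp [occFinset]⟩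

lemma apply_pos {n : ℕ} (a : Fin n → A) (x : A) (j : Fin (cnt a x)) :
    a (pos a x j) = x := by
  have h := ((occFinset a x).orderIsoOfFin rfl j).2
  simp only [occFinset, Finset.mem_filter] at h
  exact h.2

/-- The canonical permutation `σ_{a,b}` associated with two words having the same
occurrence counts: `σ_{a,b}(i) = pos_{b, a i}(occ_a i)`. -/
def canonPerm {n : ℕ} (a b : Fin n → A) (h : ∀ x, cnt a x = cnt b x) (i : Fin n) : Fin n :=
  pos b (a i) (Fin.cast (h (a i)) (occ a i))

/-- The map induced by a word morphism `φ : a → b` (i.e. `a = b ∘ φ`) on the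
occurrence sets of the letter `x`: `⌊φ⌋_x (j) = occ_b (φ (pos_{a,x} j))`. -/
def flr {m n : ℕ} (a : Fin m → A) (b : Fin n → A) (φ : Fin m → Fin n)
    (hφ : a = b ∘ φ) (x : A) (j : Fin (cnt a x)) : Fin (cnt b x) :=
  Fin.cast (congrArg (cnt b) ((congrFun hφ (pos a x j)).symm.trans (apply_pos a x j)))
    (occ b (φ (pos a x j)))

lemma pos_congr {n : ℕ} (a : Fin n → A) {x y : A} (h : x = y) (j : Fin (cnt a x)) :
    pos a y (Fin.cast (congrArg (cnt a) h) j) = pos a x j := by subst h; rfl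

lemma pos_occ {n : ℕ} (a : Fin n → A) (i : Fin n) : pos a (a i) (occ a i) = i := by
  simp [pos, occ]

lemma pos_inj {n : ℕ} (a : Fin n → A) (x : A) {j j' : Fin (cnt a x)}
    (h : pos a x j = pos a x j') : j = j' := by
  have : ((occFinset a x).orderIsoOfFin rfl j : {i // i ∈ occFinset a x}) =
      (occFinset a x).orderIsoOfFin rfl j' := Subtype.ext h
  exact ((occFinset a x).orderIsoOfFin rfl).injective this

lemma occ_pos_val {n : ℕ} (a : Fin n → A) (x : A) (j : Fin (cnt a x)) :
    ((occ a (pos a x j) : ℕ)) = j := by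
  have h : a (pos a x j) = x := apply_pos a x j
  have h1 : pos a x (Fin.cast (congrArg (cnt a) h) (occ a (pos a x j))) = pos a x j := by
    rw [pos_congr a h, pos_occ]
  have := pos_inj a x h1
  exact congrArg Fin.val this

/-- If `φ : a → b` and `φ' : a' → b'` are word morphisms between permutation-
equivalent words, compatible with the canonical permutations
(`φ' ∘ σ_{a,a'} = σ_{b,b'} ∘ φ`), then the induced maps on occurrence sets agree. -/
theorem induced_maps_agree {m n : ℕ} (a a' : Fin m → A) (b b' : Fin n → A)
    (hA : ∀ x, cnt a x = cnt a' x) (hB : ∀ x, cnt b x = cnt b' x)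
    (φ : Fin m → Fin n) (φ' : Fin m → Fin n)
    (hφ : a = b ∘ φ) (hφ' : a' = b' ∘ φ')
    (hcompat : ∀ i, φ' (canonPerm a a' hA i) = canonPerm b b' hB (φ i))
    (x : A) (j : Fin (cnt a x)) :
    ((flr a b φ hφ x j : ℕ)) = ((flr a' b' φ' hφ' x (Fin.cast (hA x) j) : ℕ)) := by
  set i := pos a x j with hi
  have h : a i = x := apply_pos a x j
  have key1 : canonPerm a a' hA i = pos a' x (Fin.cast (hA x) j) := by
    unfold canonPerm
    rw [← pos_congr a' h]
    congr 1
    apply Fin.ext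
    exact occ_pos_val a x j
  have key2 : (flr a' b' φ' hφ' x (Fin.cast (hA x) j) : ℕ) =
      (occ b' (φ' (pos a' x (Fin.cast (hA x) j))) : ℕ) := rfl
  rw [key2, ← key1, hcompat i]
  show (occ b (φ i) : ℕ) = _
  unfold canonPerm
  rw [← pos_congr b' rfl (Fin.cast (hB (b (φ i))) (occ b (φ i)))]
  rw [occ_pos_val]
  rfl
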